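/- arXiv:2209.00899 — 2 statements merged into one kernel-verified Lean document; each statement's English description precedes it below -/
import Mathlib

section
/- Let p be an odd prime and a the rooted automorphism of the p-regular tree given by the cycle σ = (0 1 ... p-1). Then the centraliser of A = ⟨a⟩ in Aut(X*) equals κ_1(Aut(X*)) ⋊ A, i.e. an automorphism g centralises a if and only if g = κ_1(h)·a^k for some h ∈ Aut(X*) and k ∈ ℤ, where κ_1(h) is the automorphism whose p first-layer sections all equal h and whose root label is trivial. -/
/-!  Automorphisms of the `p`-regular rooted tree `X*`, `X = {0, …, p-1} = ℤ/pℤ`, encoded by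
their portraits: an automorphism is the collection of its labels `g|^v ∈ Sym(X)`, `v ∈ X*`. -/

/-- The automorphism group of the `p`-regular rooted tree, encoded via portraits. -/
def TreeAut (p : ℕ) := List (ZMod p) → Equiv.Perm (ZMod p)

instance {p : ℕ} : CoeFun (TreeAut p) (fun _ => List (ZMod p) → Equiv.Perm (ZMod p)) :=
  ⟨fun g => g⟩

/-- The action of a portrait on the words of the tree. -/
def pact {p : ℕ} : TreeAut p → List (ZMod p) → List (ZMod p)
  | _, [] => []
  | L, x :: v => L [] x :: pact (fun w => L (x :: w)) v

/-- The inverse action of a portrait on the words of the tree. -/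
def pactInv {p : ℕ} : TreeAut p → List (ZMod p) → List (ZMod p)
  | _, [] => []
  | L, y :: v => (L [])⁻¹ y :: pactInv (fun w => L ((L [])⁻¹ y :: w)) v

theorem pactInv_pact {p : ℕ} (L : TreeAut p) (v : List (ZMod p)) :
    pactInv L (pact L v) = v := by
  induction v generalizing L with
  | nil => rfl
  | cons x v ih => simp [pact, pactInv]; exact ih _

theorem pact_pactInv {p : ℕ} (L : TreeAut p) (v : List (ZMod p)) :
    pact L (pactInv L v) = v := by
  induction v generalizing L with
  | nil => rfl
  | cons x v ih => simp [pact, pactInv]; exact ih _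

theorem pact_one {p : ℕ} (v : List (ZMod p)) :
    pact (fun _ => 1 : TreeAut p) v = v := by
  induction v with
  | nil => rfl
  | cons x v ih => simpa [pact] using ih

theorem pact_mulP {p : ℕ} (L M : TreeAut p) (v : List (ZMod p)) :
    pact (fun u => L (pact M u) * M u) v = pact L (pact M v) := by
  induction v generalizing L M with
  | nil => rfl
  | cons x v ih =>
    simp only [pact, Equiv.Perm.mul_apply]
    exact congrArg _ (ih (fun u => L ((M []) x :: u)) (fun w => M (x :: w)))

instance {p : ℕ} : One (TreeAut p) := ⟨fun _ => 1⟩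
instance {p : ℕ} : Mul (TreeAut p) := ⟨fun L M => fun v => L (pact M v) * M v⟩
instance {p : ℕ} : Inv (TreeAut p) := ⟨fun L => fun v => (L (pactInv L v))⁻¹⟩

theorem TreeAut.mul_def {p : ℕ} (L M : TreeAut p) (v : List (ZMod p)) :
    (L * M) v = L (pact M v) * M v := rfl
theorem TreeAut.one_def {p : ℕ} (v : List (ZMod p)) : (1 : TreeAut p) v = 1 := rfl
theorem TreeAut.inv_def {p : ℕ} (L : TreeAut p) (v : List (ZMod p)) :
    L⁻¹ v = (L (pactInv L v))⁻¹ := rfl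

instance {p : ℕ} : Group (TreeAut p) where
  mul_assoc a b c := by
    funext v
    show (a * b) (pact c v) * c v = a (pact (b * c) v) * ((b * c) v)
    show a (pact b (pact c v)) * b (pact c v) * c v
        = a (pact (fun u => b (pact c u) * c u) v) * (b (pact c v) * c v)
    rw [pact_mulP, mul_assoc]
  one_mul a := by
    funext v
    show (1 : TreeAut p) (pact a v) * a v = a v
    simp [TreeAut.one_def]
  mul_one a := by
    funext v
    show a (pact (fun _ => 1) v) * (1 : Equiv.Perm (ZMod p)) = a v
    rw [pact_one, mul_one]
  inv_mul_cancel a := by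
    funext v
    show (a (pactInv a (pact a v)))⁻¹ * a v = (1 : TreeAut p) v
    rw [pactInv_pact, TreeAut.one_def, inv_mul_cancel]

/-- The rooted automorphism with label `σ` at the root and trivial labels elsewhere. -/
def rootedAut {p : ℕ} (σ : Equiv.Perm (ZMod p)) : TreeAut p :=
  fun v => if v = [] then σ else 1

/-- The rooted automorphism `a` given by the `p`-cycle `σ = (0 1 … p-1)`, `x ↦ x + 1`. -/
def aAut (p : ℕ) : TreeAut p := rootedAut (Equiv.addRight (1 : ZMod p))

/-- The section `g|_x` of `g` at the first-layer vertex `x`. -/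
def sect {p : ℕ} (g : TreeAut p) (x : ZMod p) : TreeAut p := fun v => g (x :: v)

/-- The `n`-th diagonal `κ_n(g) = ψ_n⁻¹(g, …, g)`. -/
def kappa {p : ℕ} (n : ℕ) (g : TreeAut p) : TreeAut p :=
  fun v => if n ≤ v.length then g (v.drop n) else 1

/-- `ψ_n⁻¹(g, 1, …, 1)`: the automorphism acting as `g` below the vertex `0^n` and trivially
elsewhere. -/
def embAt {p : ℕ} (n : ℕ) (g : TreeAut p) : TreeAut p :=
  fun v => if List.replicate n (0 : ZMod p) <+: v then g (v.drop n) else 1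

/-- The scalar product of two vectors in `𝔽_p^r`. -/
def dotp {p r : ℕ} (n m : Fin r → ZMod p) : ZMod p := ∑ j, n j * m j

/-- The directed generator `b^n` of the multi-GGS group with defining data
`e : ℤ/pℤ → 𝔽_p^r` (the columns of the matrix `E`, with `e 0 = 0`): it satisfies
`ψ_1(b^n) = (b^n, a^{n·e_1}, …, a^{n·e_{p-1}})`. -/
def bAut {p r : ℕ} (e : ZMod p → Fin r → ZMod p) (n : Fin r → ZMod p) : TreeAut p :=
  fun v =>
    match v.getLast? with
    | none => 1
    | some i =>
      if ∀ x ∈ v.dropLast, x = 0 then Equiv.addRight (dotp n (e i)) else 1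

/-- The multi-GGS group `G_E = ⟨A ∪ B⟩` associated to the data `e`. -/
def GGS {p r : ℕ} (e : ZMod p → Fin r → ZMod p) : Subgroup (TreeAut p) :=
  Subgroup.closure ({aAut p} ∪ Set.range (bAut e))

open scoped commutatorElement

/-- The element `c̲ = ψ_1⁻¹([b^{s_1}, a], 1, …, 1)`. -/
def cAut {p r : ℕ} (e : ZMod p → Fin r → ZMod p) : TreeAut p :=
  embAt 1 ⁅bAut e (fun j => if (j : ℕ) = 0 then 1 else 0), aAut p⁆

/-- The regularisation `G_reg = ⟨G ∪ {c̲}⟩` of a multi-GGS group. -/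
def GGSreg {p r : ℕ} (e : ZMod p → Fin r → ZMod p) : Subgroup (TreeAut p) :=
  Subgroup.closure ({aAut p, cAut e} ∪ Set.range (bAut e))

/-- The word length on `Aut(X*)` with respect to the generating set `A ∪ B` of the multi-GGS
group determined by `e`. -/
noncomputable def ggsLength {p r : ℕ} (e : ZMod p → Fin r → ZMod p) (g : TreeAut p) : ℕ :=
  sInf {m | ∃ l : List (TreeAut p),
    (∀ x ∈ l, x ∈ Subgroup.zpowers (aAut p) ∨ x ∈ Set.range (bAut e)) ∧
    l.length = m ∧ l.prod = g}

/-- `e` defines a *non-constant* multi-GGS group: the defining space `E` is not the line of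
constant vectors. -/
def NonConstant {p r : ℕ} (e : ZMod p → Fin r → ZMod p) : Prop :=
  (∃ i j : ZMod p, i ≠ 0 ∧ j ≠ 0 ∧ e i ≠ e j) ∧
    LinearIndependent (ZMod p) (fun j : Fin r => fun i : ZMod p => e i j)

/-- `e` defines a *symmetric* GGS group: `r = 1`, the defining space is contained in the
symmetric subspace `{λ : λ_i = λ_{p-i}}`, and the group is non-constant. -/
def IsSymmetricGGS {p r : ℕ} (e : ZMod p → Fin r → ZMod p) : Prop :=
  r = 1 ∧ (∀ (i : ZMod p) (j : Fin r), e i j = e (-i) j) ∧ NonConstant e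

/-- `e` defines a *regular* multi-GGS group: non-constant and not symmetric. -/
def IsRegularGGS {p r : ℕ} (e : ZMod p → Fin r → ZMod p) : Prop :=
  NonConstant e ∧ ¬ IsSymmetricGGS e

/-!
If `g` commutes with `a`, comparing labels at the root shows that `g|^∅` commutes with the
`p`-cycle `x ↦ x + 1`, so it is a translation `x ↦ x + k`, i.e. the root label of `a^k`;
comparing labels below the first layer shows `g|_{x+1} = g|_x` for every `x`, so all
first-layer sections equal a single `h`. These two facts say exactly that `g = κ_1(h) a^k`.
Conversely, `a` permutes the first-layer sections of `κ_1(h) a^k`, which are all equal, and its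
root label commutes with the translation by `k`.
-/

open Equiv

namespace ZMod

variable {n : ℕ}

theorem periodic_one_iff {α : Type*} {f : ZMod n → α} :
    Function.Periodic f 1 ↔ ∃ c, ∀ x, f x = c := by
  constructor
  · intro hf
    refine ⟨f 0, fun x => ?_⟩
    obtain ⟨k, rfl⟩ := ZMod.intCast_surjective x
    simpa using hf.int_mul_eq k
  · rintro ⟨c, hc⟩ x
    rw [hc, hc]

theorem commute_addRight_one_iff {τ : Perm (ZMod n)} :
    Commute τ (Equiv.addRight 1) ↔ ∃ c, τ = Equiv.addRight c := by
  constructor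
  · intro hτ
    have hdisplacement : Function.Periodic (fun x => τ x - x) 1 := fun x => by
      have := Perm.ext_iff.mp hτ x
      simp only [Perm.mul_apply, coe_addRight] at this
      simp only [this]
      ring
    obtain ⟨c, hc⟩ := periodic_one_iff.mp hdisplacement
    exact ⟨c, Perm.ext fun x => by simp [← hc x]⟩
  · rintro ⟨c, rfl⟩
    exact Perm.ext fun x => by simp only [Perm.mul_apply, coe_addRight]; ring

end ZMod

namespace TreeAut

variable {p : ℕ}

theorem mul_apply_nil (g h : TreeAut p) : (g * h) [] = g [] * h [] := rfl

theorem pact_rootedAut_cons (σ : Perm (ZMod p)) (x : ZMod p) (v : List (ZMod p)) :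
    pact (rootedAut σ) (x :: v) = σ x :: v := by
  have hbelow : (fun w => rootedAut σ (x :: w)) = (fun _ => 1 : TreeAut p) := by
    funext w
    simp [rootedAut]
  rw [pact, hbelow, pact_one]
  rfl

theorem mul_rootedAut_apply_cons (g : TreeAut p) (σ : Perm (ZMod p)) (x : ZMod p)
    (v : List (ZMod p)) : (g * rootedAut σ) (x :: v) = g (σ x :: v) := by
  rw [mul_def, pact_rootedAut_cons]
  simp [rootedAut]

theorem rootedAut_mul_apply_cons (σ : Perm (ZMod p)) (g : TreeAut p) (x : ZMod p)
    (v : List (ZMod p)) : (rootedAut σ * g) (x :: v) = g (x :: v) := by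
  rw [mul_def, pact]
  simp [rootedAut]

theorem ext_nil_cons {g h : TreeAut p} (hnil : g [] = h [])
    (hcons : ∀ x v, g (x :: v) = h (x :: v)) : g = h := by
  funext v
  cases v with
  | nil => exact hnil
  | cons x v => exact hcons x v

def rootedAutHom : Perm (ZMod p) →* TreeAut p where
  toFun := rootedAut
  map_one' := by
    funext v
    simp [rootedAut, one_def]
  map_mul' σ τ := by
    refine ext_nil_cons rfl fun x v => ?_
    rw [mul_rootedAut_apply_cons]
    simp [rootedAut]

theorem aAut_zpow (k : ℤ) : aAut p ^ k = rootedAut (Equiv.addRight (k : ZMod p)) := by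
  change rootedAutHom (Equiv.addRight 1) ^ k = rootedAutHom _
  rw [← map_zpow, zsmul_addRight, zsmul_one]

theorem commute_rootedAut_iff {g : TreeAut p} {σ : Perm (ZMod p)} :
    Commute g (rootedAut σ) ↔ Commute (g []) σ ∧ ∀ x, sect g (σ x) = sect g x := by
  constructor
  · intro hc
    refine ⟨congrFun hc [], fun x => funext fun v => ?_⟩
    have := congrFun hc (x :: v)
    rwa [mul_rootedAut_apply_cons, rootedAut_mul_apply_cons] at this
  · rintro ⟨hroot, hsect⟩
    refine ext_nil_cons hroot fun x v => ?_
    rw [mul_rootedAut_apply_cons, rootedAut_mul_apply_cons]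
    exact congrFun (hsect x) v

theorem kappa_one_apply_nil (h : TreeAut p) : kappa 1 h [] = 1 := by
  simp [kappa]

theorem kappa_one_apply_cons (h : TreeAut p) (x : ZMod p) (v : List (ZMod p)) :
    kappa 1 h (x :: v) = h v := by
  simp [kappa]

theorem eq_kappa_one_mul_rootedAut_iff {g h : TreeAut p} {σ : Perm (ZMod p)} :
    g = kappa 1 h * rootedAut σ ↔ g [] = σ ∧ ∀ x, sect g x = h := by
  have hnil : (kappa 1 h * rootedAut σ) [] = σ := by
    rw [mul_apply_nil, kappa_one_apply_nil, one_mul]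
    rfl
  have hcons x v : (kappa 1 h * rootedAut σ) (x :: v) = h v := by
    rw [mul_rootedAut_apply_cons, kappa_one_apply_cons]
  constructor
  · rintro rfl
    exact ⟨hnil, fun x => funext (hcons x)⟩
  · rintro ⟨hroot, hsect⟩
    refine ext_nil_cons (hroot.trans hnil.symm) fun x v => ?_
    rw [hcons, ← hsect x]
    rfl

end TreeAut

open TreeAut in
theorem centralizer_rooted_a_general (p : ℕ) (g : TreeAut p) :
    g ∈ Subgroup.centralizer
        ((Subgroup.zpowers (aAut p) : Subgroup (TreeAut p)) : Set (TreeAut p)) ↔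
      ∃ (h : TreeAut p) (k : ℤ), g = kappa 1 h * aAut p ^ k := by
  simp only [aAut_zpow, eq_kappa_one_mul_rootedAut_iff]
  rw [Subgroup.zpowers_eq_closure, Subgroup.centralizer_closure,
    Subgroup.mem_centralizer_singleton_iff, ← commute_iff_eq, aAut, commute_rootedAut_iff,
    ZMod.commute_addRight_one_iff]
  simp only [coe_addRight]
  rw [← Function.Periodic, ZMod.periodic_one_iff]
  constructor
  · rintro ⟨⟨c, hroot⟩, h, hsect⟩
    obtain ⟨k, rfl⟩ := ZMod.intCast_surjective c
    exact ⟨h, k, hroot, hsect⟩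
  · rintro ⟨h, k, hroot, hsect⟩
    exact ⟨⟨k, hroot⟩, h, hsect⟩

/-- Let `p` be an odd prime and `a` the rooted automorphism of the `p`-regular tree given by
the cycle `σ = (0 1 … p-1)`.  Then the centraliser of `A = ⟨a⟩` in `Aut(X*)` equals
`κ_1(Aut(X*)) ⋊ A`: an automorphism `g` centralises `a` if and only if `g = κ_1(h) · a^k` for
some `h ∈ Aut(X*)` and `k ∈ ℤ`. -/
theorem centralizer_rooted_a (p : ℕ) [Fact p.Prime] (hp : Odd p) (g : TreeAut p) :
    g ∈ Subgroup.centralizer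
        ((Subgroup.zpowers (aAut p) : Subgroup (TreeAut p)) : Set (TreeAut p)) ↔
      ∃ (h : TreeAut p) (k : ℤ), g = kappa 1 h * aAut p ^ k :=
  centralizer_rooted_a_general p g
end

section
/- Let p be an odd prime and a the rooted p-cycle automorphism of the p-regular tree. Then the normaliser of A = ⟨a⟩ in Aut(X*) equals κ_1(Aut(X*)) ⋊ rooted(Nor_{Sym(X)}(Σ)), where Σ = ⟨σ⟩. -/
open scoped commutatorElement

/-!
A normaliser `g` of `⟨a⟩` satisfies `g a = a^k g` for some `k`. Comparing labels below the root,
this says `g|_{x+1} = g|_x` for every `x`, so all first-layer sections of `g` agree and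
`g = κ_1(h) · rooted(g|^∅)`. Since `κ_1(Aut(X*))` commutes with the rooted automorphisms,
conjugating `rooted(σ)` by `κ_1(h) · rooted(τ)` gives `rooted(τ σ τ⁻¹)`; as `rooted` is an injective
homomorphism, `κ_1(h) · rooted(τ)` normalises `⟨rooted(σ)⟩` exactly when `τ` normalises `⟨σ⟩`.
-/

section RootedAut

variable {p : ℕ}

@[simp]
theorem rootedAut_nil (τ : Equiv.Perm (ZMod p)) : rootedAut τ [] = τ := rfl

@[simp]
theorem rootedAut_cons (τ : Equiv.Perm (ZMod p)) (x : ZMod p) (w : List (ZMod p)) :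
    rootedAut τ (x :: w) = 1 := by
  simp [rootedAut]

theorem pact_rootedAut_cons (τ : Equiv.Perm (ZMod p)) (x : ZMod p) (w : List (ZMod p)) :
    pact (rootedAut τ) (x :: w) = τ x :: w := by
  change τ x :: pact (fun _ => 1) w = τ x :: w
  rw [pact_one]

@[simp]
theorem kappa_one_nil (h : TreeAut p) : kappa 1 h [] = 1 := rfl

@[simp]
theorem kappa_one_cons (h : TreeAut p) (x : ZMod p) (w : List (ZMod p)) :
    kappa 1 h (x :: w) = h w := by
  simp [kappa]

@[simp]
theorem mul_rootedAut_nil (g : TreeAut p) (s : Equiv.Perm (ZMod p)) :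
    (g * rootedAut s) [] = g [] * s := rfl

@[simp]
theorem mul_rootedAut_cons (g : TreeAut p) (s : Equiv.Perm (ZMod p)) (x : ZMod p)
    (w : List (ZMod p)) : (g * rootedAut s) (x :: w) = g (s x :: w) := by
  rw [TreeAut.mul_def, pact_rootedAut_cons, rootedAut_cons, mul_one]

@[simp]
theorem rootedAut_mul_nil (t : Equiv.Perm (ZMod p)) (g : TreeAut p) :
    (rootedAut t * g) [] = t * g [] := rfl

@[simp]
theorem rootedAut_mul_cons (t : Equiv.Perm (ZMod p)) (g : TreeAut p) (x : ZMod p)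
    (w : List (ZMod p)) : (rootedAut t * g) (x :: w) = g (x :: w) := by
  rw [TreeAut.mul_def]
  change rootedAut t (g [] x :: _) * _ = _
  rw [rootedAut_cons, one_mul]

variable (p) in
def rootedHom : Equiv.Perm (ZMod p) →* TreeAut p where
  toFun := rootedAut
  map_one' := by
    funext v
    cases v <;> rfl
  map_mul' _ _ := by
    funext v
    cases v with
    | nil => rfl
    | cons x w => simp

@[simp]
theorem rootedHom_apply (τ : Equiv.Perm (ZMod p)) : rootedHom p τ = rootedAut τ := rfl

theorem rootedHom_injective : Function.Injective (rootedHom p) :=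
  fun _ _ h => congrFun h []

theorem kappa_one_commute_rootedAut (h : TreeAut p) (s : Equiv.Perm (ZMod p)) :
    Commute (kappa 1 h) (rootedAut s) := by
  funext v
  cases v <;> simp

theorem conj_rootedAut (τ s : Equiv.Perm (ZMod p)) :
    MulAut.conj (rootedAut τ) (rootedAut s) = rootedAut (MulAut.conj τ s) := by
  simp only [MulAut.conj_apply, ← rootedHom_apply, map_mul, map_inv]

theorem conj_kappa_one_mul_rootedAut (h : TreeAut p) (τ s : Equiv.Perm (ZMod p)) :
    MulAut.conj (kappa 1 h * rootedAut τ) (rootedAut s) = rootedAut (MulAut.conj τ s) := by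
  rw [map_mul, MulAut.mul_apply, conj_rootedAut, MulAut.conj_apply,
    (kappa_one_commute_rootedAut h _).mul_inv_cancel]

theorem kappa_one_mul_rootedAut_mem_normalizer_iff (h : TreeAut p) (τ s : Equiv.Perm (ZMod p)) :
    kappa 1 h * rootedAut τ ∈
        Subgroup.normalizer (Subgroup.zpowers (rootedAut s) : Set (TreeAut p)) ↔
      τ ∈ Subgroup.normalizer (Subgroup.zpowers s : Set (Equiv.Perm (ZMod p))) := by
  simp only [Subgroup.mem_normalizer_iff_map_conj_eq, MonoidHom.map_zpowers, MonoidHom.coe_coe,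
    conj_kappa_one_mul_rootedAut]
  rw [← rootedHom_apply, ← rootedHom_apply, ← MonoidHom.map_zpowers, ← MonoidHom.map_zpowers,
    (Subgroup.map_injective rootedHom_injective).eq_iff]

theorem sect_apply_eq_of_mul_rootedAut_eq {g : TreeAut p} {s t : Equiv.Perm (ZMod p)}
    (hg : g * rootedAut s = rootedAut t * g) (x : ZMod p) : sect g (s x) = sect g x := by
  funext w
  simpa [sect] using congrFun hg (x :: w)

theorem eq_kappa_one_mul_rootedAut {g h : TreeAut p} (hg : ∀ x, sect g x = h) :
    g = kappa 1 h * rootedAut (g []) := by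
  funext v
  cases v with
  | nil => simp
  | cons x w => simp [← hg x, sect]

end RootedAut

theorem sect_eq_of_mem_normalizer {p : ℕ} {g : TreeAut p}
    (hg : g ∈ Subgroup.normalizer (Subgroup.zpowers (aAut p) : Set (TreeAut p))) (x : ZMod p) :
    sect g x = sect g 0 := by
  obtain ⟨k, hk⟩ := Subgroup.mem_zpowers_iff.mp
    ((Subgroup.mem_normalizer_iff.mp hg (aAut p)).mp (Subgroup.mem_zpowers _))
  have hcomm : g * rootedAut (Equiv.addRight 1) = rootedAut (Equiv.addRight 1 ^ k) * g := by
    rw [← rootedHom_apply (_ ^ k), map_zpow, rootedHom_apply, ← aAut, hk, inv_mul_cancel_right]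
  have hper : Function.Periodic (sect g) 1 := sect_apply_eq_of_mul_rootedAut_eq hcomm
  -- every `x : ZMod p` is an integer multiple of `1`
  simpa using hper.int_mul (x.cast : ℤ) 0

theorem normalizer_rooted_a_general (p : ℕ) (g : TreeAut p) :
    g ∈ Subgroup.normalizer (Subgroup.zpowers (aAut p) : Set (TreeAut p)) ↔
      ∃ (h : TreeAut p) (τ : Equiv.Perm (ZMod p)),
        τ ∈ Subgroup.normalizer
          (Subgroup.zpowers (Equiv.addRight (1 : ZMod p)) : Set (Equiv.Perm (ZMod p))) ∧
        g = kappa 1 h * rootedAut τ := by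
  constructor
  · intro hg
    have hdecomp := eq_kappa_one_mul_rootedAut (sect_eq_of_mem_normalizer hg)
    refine ⟨sect g 0, g [], ?_, hdecomp⟩
    rw [hdecomp] at hg
    exact (kappa_one_mul_rootedAut_mem_normalizer_iff _ _ _).mp hg
  · rintro ⟨h, τ, hτ, rfl⟩
    exact (kappa_one_mul_rootedAut_mem_normalizer_iff h τ _).mpr hτ

/-- Let `p` be an odd prime and `a` the rooted `p`-cycle automorphism of the `p`-regular
tree.  Then the normaliser of `A = ⟨a⟩` in `Aut(X*)` equals
`κ_1(Aut(X*)) ⋊ rooted(Nor_{Sym(X)}(Σ))`, where `Σ = ⟨σ⟩`. -/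
theorem normalizer_rooted_a (p : ℕ) [Fact p.Prime] (hp : Odd p) (g : TreeAut p) :
    g ∈ Subgroup.normalizer (Subgroup.zpowers (aAut p) : Set (TreeAut p)) ↔
      ∃ (h : TreeAut p) (τ : Equiv.Perm (ZMod p)),
        τ ∈ Subgroup.normalizer
          (Subgroup.zpowers (Equiv.addRight (1 : ZMod p)) : Set (Equiv.Perm (ZMod p))) ∧
        g = kappa 1 h * rootedAut τ :=
  normalizer_rooted_a_general p g
end
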